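/- Let m ≥ 1 and let F(x) = ((2m+1)x − x^{2m+1})/(2m), a polynomial of odd degree 2m+1. Then F(1) = 1, F(−1) = −1, F'(1) = F'(−1) = 0, and for all y ∈ (−1,1) one has F'(y) > 0 and |F(y)| < 1. Moreover there exists a global solution (x,u,θ): ℝ → ℝ³ of x' = cos θ, u' = sin θ, θ' = F'(x) with sin θ(s) = F(x(s)), cos θ(s) > 0 and −1 < x(s) < 1 for all s, x(s) → −1 as s → −∞, and x(s) → 1 as s → +∞; hence the plane curve (x(s),u(s)) is a graph over the interval (−1,1), giving an infinite geodesic graph at the odd jet level k = 2m+1 ≥ 3. -/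

import Mathlib

/-!
Along a solution of the curvature system `sin θ - F x` is constant, so with `sin θ = F x` and
`cos θ > 0` the system reduces to the scalar equation `x' = g x`, `g = √(1 - F²)`, and the angle
is recovered as `θ = arcsin (F ∘ x)`. Since `F` increases from `-1` to `1` on `[-1, 1]`, `g` is
positive on `(-1, 1)` and the equation is solved by inverting the travel time `z ↦ ∫₀^z dt / g t`.
As `F'(±1) = 0`, `F` meets `±1` to second order, so `g` vanishes only linearly at `±1`; the travel
time then diverges logarithmically at both ends, which makes the solution global with
`x(s) → ±1` as `s → ±∞`.
-/

open Filter

/-- The odd-degree polynomial function `F(y) = ((2m+1)y − y^{2m+1})/(2m)` generating an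
infinite geodesic graph at the odd jet level `k = 2m+1`. -/
noncomputable def oddGraphF (m : ℕ) : ℝ → ℝ :=
  fun y => ((2 * (m : ℝ) + 1) * y - y ^ (2 * m + 1)) / (2 * (m : ℝ))

open Set Topology Real intervalIntegral

section Quadrature

noncomputable def travelTime (g : ℝ → ℝ) (c z : ℝ) : ℝ := ∫ t in c..z, (g t)⁻¹

theorem travelTime_comp_neg (g : ℝ → ℝ) (c z : ℝ) :
    travelTime (fun t => g (-t)) (-c) (-z) = -travelTime g c z := by
  rw [travelTime, travelTime, integral_comp_neg (fun t => (g t)⁻¹), neg_neg, neg_neg,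
    integral_symm]

variable {g : ℝ → ℝ} {a b c : ℝ}

theorem hasDerivAt_travelTime (hg : ContinuousOn g (Ioo a b)) (hpos : ∀ t ∈ Ioo a b, 0 < g t)
    (hc : c ∈ Ioo a b) {z : ℝ} (hz : z ∈ Ioo a b) :
    HasDerivAt (travelTime g c) (g z)⁻¹ z := by
  have hinv : ContinuousOn (fun t => (g t)⁻¹) (Ioo a b) := hg.inv₀ fun t ht => (hpos t ht).ne'
  exact integral_hasDerivAt_right
    ((hinv.mono (ordConnected_Ioo.uIcc_subset hc hz)).intervalIntegrable)
    (hinv.stronglyMeasurableAtFilter isOpen_Ioo z hz) (hinv.continuousAt (isOpen_Ioo.mem_nhds hz))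

theorem strictMonoOn_travelTime (hg : ContinuousOn g (Ioo a b)) (hpos : ∀ t ∈ Ioo a b, 0 < g t)
    (hc : c ∈ Ioo a b) : StrictMonoOn (travelTime g c) (Ioo a b) :=
  strictMonoOn_of_hasDerivWithinAt_pos (convex_Ioo a b)
    (fun _ hz => (hasDerivAt_travelTime hg hpos hc hz).continuousAt.continuousWithinAt)
    (fun _ hz => (hasDerivAt_travelTime hg hpos hc (interior_subset hz)).hasDerivWithinAt)
    (fun _ hz => inv_pos.2 (hpos _ (interior_subset hz)))

theorem tendsto_travelTime_nhdsLT (hcb : c < b) (hg : ContinuousOn g (Ico c b))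
    (hpos : ∀ t ∈ Ico c b, 0 < g t) {K : ℝ} (hK : 0 < K)
    (hbound : ∀ t ∈ Ico c b, g t ≤ K * (b - t)) :
    Tendsto (travelTime g c) (𝓝[<] b) atTop := by
  have hlower : ∀ z ∈ Ico c b, K⁻¹ * (log (b - c) - log (b - z)) ≤ travelTime g c z := by
    intro z hz
    have hsub : uIcc c z ⊆ Ico c b := ordConnected_Ico.uIcc_subset (left_mem_Ico.2 hcb) hz
    calc K⁻¹ * (log (b - c) - log (b - z))
        = ∫ t in c..z, K⁻¹ * (b - t)⁻¹ := by
          rw [integral_const_mul, integral_comp_sub_left (fun t => t⁻¹) b,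
            integral_inv_of_pos (by linarith [hz.2]) (by linarith),
            log_div (by linarith) (by linarith [hz.2])]
      _ ≤ travelTime g c z := by
          refine integral_mono_on hz.1 ?_ ?_ fun t ht => ?_
          · exact (continuousOn_const.mul <| (continuousOn_const.sub continuousOn_id).inv₀
              fun t ht => (sub_pos.2 (hsub ht).2).ne').intervalIntegrable
          · exact ((hg.mono hsub).inv₀ fun t ht => (hpos t (hsub ht)).ne').intervalIntegrable
          · have ht' : t ∈ Ico c b := hsub (uIcc_of_le hz.1 ▸ ht)
            rw [← mul_inv]
            exact inv_anti₀ (hpos t ht') (hbound t ht')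
  have hgap : Tendsto (fun z => b - z) (𝓝[<] b) (𝓝[>] 0) :=
    tendsto_nhdsWithin_iff.2
      ⟨((continuous_const.sub continuous_id).tendsto' b 0 (sub_self b)).mono_left
        nhdsWithin_le_nhds, eventually_nhdsWithin_of_forall fun _ hz => mem_Ioi.2 (sub_pos.2 hz)⟩
  have hdiv : Tendsto (fun z => K⁻¹ * (log (b - c) - log (b - z))) (𝓝[<] b) atTop := by
    refine Tendsto.const_mul_atTop (inv_pos.2 hK) ?_
    simpa only [sub_eq_add_neg, Function.comp_def] using
      tendsto_atTop_add_const_left _ (log (b - c))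
        (tendsto_neg_atBot_atTop.comp (tendsto_log_nhdsGT_zero.comp hgap))
  refine tendsto_atTop_mono' _ ?_ hdiv
  filter_upwards [Ico_mem_nhdsLT hcb] with z hz
  exact hlower z hz

theorem tendsto_travelTime_nhdsGT (hac : a < c) (hg : ContinuousOn g (Ioc a c))
    (hpos : ∀ t ∈ Ioc a c, 0 < g t) {K : ℝ} (hK : 0 < K)
    (hbound : ∀ t ∈ Ioc a c, g t ≤ K * (t - a)) :
    Tendsto (travelTime g c) (𝓝[>] a) atBot := by
  have hneg : ∀ t ∈ Ico (-c) (-a), -t ∈ Ioc a c := fun t ht =>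
    ⟨lt_neg_of_lt_neg ht.2, neg_le.1 ht.1⟩
  have hrefl := tendsto_travelTime_nhdsLT (g := fun t => g (-t)) (neg_lt_neg hac)
    (hg.comp continuousOn_neg hneg) (fun t ht => hpos _ (hneg t ht)) hK
    (fun t ht => by simpa [sub_eq_add_neg, add_comm] using hbound _ (hneg t ht))
  have := tendsto_neg_atTop_atBot.comp (hrefl.comp (tendsto_neg_nhdsGT_neg (a := -a)))
  simpa [Function.comp_def, neg_neg, ← travelTime_comp_neg] using this

theorem exists_global_solution_of_tendsto_travelTime (hc : c ∈ Ioo a b)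
    (hg : ContinuousOn g (Ioo a b)) (hpos : ∀ t ∈ Ioo a b, 0 < g t)
    (hbot : Tendsto (travelTime g c) (𝓝[>] a) atBot)
    (htop : Tendsto (travelTime g c) (𝓝[<] b) atTop) :
    ∃ x : ℝ → ℝ, (∀ s, HasDerivAt x (g (x s)) s ∧ x s ∈ Ioo a b) ∧
      Tendsto x atBot (𝓝 a) ∧ Tendsto x atTop (𝓝 b) := by
  have hab : a < b := hc.1.trans hc.2
  have hderiv := fun {z} (hz : z ∈ Ioo a b) => hasDerivAt_travelTime hg hpos hc hz
  have hsurj : SurjOn (travelTime g c) (Ioo a b) univ :=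
    ContinuousOn.surjOn_of_tendsto (nonempty_Ioo.2 hab)
      (fun z hz => (hderiv hz).continuousAt.continuousWithinAt)
      ((tendsto_comp_coe_Ioo_atBot hab).2 hbot) ((tendsto_comp_coe_Ioo_atTop hab).2 htop)
  let e : Ioo a b ≃o ℝ := ((strictMonoOn_travelTime hg hpos hc).orderIso _ _).trans <|
    (OrderIso.setCongr _ _ (univ_subset_iff.1 hsurj)).trans OrderIso.Set.univ
  have hcont : Continuous fun s => (e.symm s : ℝ) := continuous_subtype_val.comp e.symm.continuous
  refine ⟨fun s => e.symm s, fun s => ⟨?_, (e.symm s).2⟩,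
    ((tendsto_Ioo_atBot).1 e.symm.tendsto_atBot).mono_right nhdsWithin_le_nhds,
    ((tendsto_Ioo_atTop).1 e.symm.tendsto_atTop).mono_right nhdsWithin_le_nhds⟩
  have := (hderiv (e.symm s).2).of_local_left_inverse hcont.continuousAt
    (inv_ne_zero (hpos _ (e.symm s).2).ne') (Eventually.of_forall e.apply_symm_apply)
  rwa [inv_inv] at this

end Quadrature

theorem exists_curvature_solution_of_hasDerivAt {F x : ℝ → ℝ} (hF : Differentiable ℝ F)
    (hx : ∀ s, HasDerivAt x (√(1 - F (x s) ^ 2)) s) (hFx : ∀ s, |F (x s)| < 1) :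
    ∃ u θ : ℝ → ℝ, ∀ s, HasDerivAt x (cos (θ s)) s ∧ HasDerivAt u (sin (θ s)) s ∧
      HasDerivAt θ (deriv F (x s)) s ∧ sin (θ s) = F (x s) ∧ 0 < cos (θ s) := by
  have hroot : ∀ s, 0 < √(1 - F (x s) ^ 2) := fun s =>
    sqrt_pos.2 (by nlinarith [abs_lt.1 (hFx s), sq_abs (F (x s))])
  have hθ : ∀ s, HasDerivAt (fun s => arcsin (F (x s))) (deriv F (x s)) s := fun s => by
    have h := (hasDerivAt_arcsin (abs_lt.1 (hFx s)).1.ne' (abs_lt.1 (hFx s)).2.ne).comp s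
      ((hF (x s)).hasDerivAt.comp s (hx s))
    refine h.congr_deriv ?_
    field_simp [(hroot s).ne']
  have hsin : Continuous fun s => sin (arcsin (F (x s))) :=
    continuous_sin.comp (continuous_iff_continuousAt.2 fun s => (hθ s).continuousAt)
  refine ⟨fun s => ∫ t in (0 : ℝ)..s, sin (arcsin (F (x t))), fun s => arcsin (F (x s)),
    fun s => ⟨?_, (hsin.integral_hasStrictDerivAt 0 s).hasDerivAt, hθ s,
      sin_arcsin (abs_lt.1 (hFx s)).1.le (abs_lt.1 (hFx s)).2.le, ?_⟩⟩
  · rw [cos_arcsin]; exact hx s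
  · rw [cos_arcsin]; exact hroot s

section OddGraph

variable {m : ℕ}

theorem hasDerivAt_oddGraphF (m : ℕ) (y : ℝ) :
    HasDerivAt (oddGraphF m) ((2 * m + 1) * (1 - y ^ (2 * m)) / (2 * m)) y := by
  refine ((((hasDerivAt_id y).const_mul _).sub (hasDerivAt_pow (2 * m + 1) y)).div_const
    _).congr_deriv ?_
  push_cast
  ring

theorem deriv_oddGraphF (m : ℕ) (y : ℝ) :
    deriv (oddGraphF m) y = (2 * m + 1) * (1 - y ^ (2 * m)) / (2 * m) :=
  (hasDerivAt_oddGraphF m y).deriv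

theorem differentiable_oddGraphF (m : ℕ) : Differentiable ℝ (oddGraphF m) :=
  fun y => (hasDerivAt_oddGraphF m y).differentiableAt

theorem oddGraphF_neg (m : ℕ) (y : ℝ) : oddGraphF m (-y) = -oddGraphF m y := by
  rw [oddGraphF, oddGraphF, Odd.neg_pow ⟨m, rfl⟩]
  ring

theorem oddGraphF_one (hm : m ≠ 0) : oddGraphF m 1 = 1 := by
  have : (2 * m : ℝ) ≠ 0 := by positivity
  simp only [oddGraphF, one_pow]
  field_simp
  ring

theorem oddGraphF_neg_one (hm : m ≠ 0) : oddGraphF m (-1) = -1 := by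
  rw [oddGraphF_neg, oddGraphF_one hm]

theorem deriv_oddGraphF_pos (hm : m ≠ 0) {y : ℝ} (hy : y ∈ Ioo (-1 : ℝ) 1) :
    0 < deriv (oddGraphF m) y := by
  have hpow : y ^ (2 * m) < 1 := by
    rw [pow_mul]
    exact pow_lt_one₀ (sq_nonneg y) (by nlinarith [hy.1, hy.2]) hm
  rw [deriv_oddGraphF]
  exact div_pos (mul_pos (by positivity) (sub_pos.2 hpow)) (by positivity)

theorem strictMonoOn_oddGraphF (hm : m ≠ 0) : StrictMonoOn (oddGraphF m) (Icc (-1) 1) :=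
  strictMonoOn_of_deriv_pos (convex_Icc _ _) (differentiable_oddGraphF m).continuous.continuousOn
    fun y hy => deriv_oddGraphF_pos hm (by rwa [interior_Icc] at hy)

theorem abs_oddGraphF_lt_one (hm : m ≠ 0) {y : ℝ} (hy : y ∈ Ioo (-1 : ℝ) 1) :
    |oddGraphF m y| < 1 := by
  have hlo := strictMonoOn_oddGraphF hm (left_mem_Icc.2 (by norm_num)) (mem_Icc_of_Ioo hy) hy.1
  have hhi := strictMonoOn_oddGraphF hm (mem_Icc_of_Ioo hy) (right_mem_Icc.2 (by norm_num)) hy.2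
  rw [oddGraphF_neg_one hm] at hlo
  rw [oddGraphF_one hm] at hhi
  exact abs_lt.2 ⟨hlo, hhi⟩

theorem one_sub_oddGraphF_le (hm : m ≠ 0) {t : ℝ} (ht : t ∈ Icc (0 : ℝ) 1) :
    2 * (1 - oddGraphF m t) ≤ (2 * m + 1) * (1 - t) ^ 2 := by
  set h : ℝ → ℝ := fun y => (2 * m + 1) * (1 - y) ^ 2 - 2 * (1 - oddGraphF m y)
  have hh : ∀ y, HasDerivAt h (-2 * (2 * m + 1) * (1 - y) + 2 * deriv (oddGraphF m) y) y := by
    intro y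
    refine ((((hasDerivAt_id' y).const_sub 1).pow 2).const_mul _).sub
      (((hasDerivAt_oddGraphF m y).const_sub 1).const_mul 2) |>.congr_deriv ?_
    rw [deriv_oddGraphF]
    push_cast
    ring
  have hanti : AntitoneOn h (Icc 0 1) := by
    refine antitoneOn_of_deriv_nonpos (convex_Icc 0 1)
      (fun y _ => (hh y).continuousAt.continuousWithinAt)
      (fun y _ => (hh y).differentiableAt.differentiableWithinAt) fun y hy => ?_
    rw [interior_Icc] at hy
    have hbern : 1 - y ^ (2 * m) ≤ 2 * m * (1 - y) := by
      have := one_add_mul_le_pow (show (-2 : ℝ) ≤ y - 1 by linarith [hy.1]) (2 * m)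
      rw [add_sub_cancel] at this
      push_cast at this
      linarith
    rw [(hh y).deriv, deriv_oddGraphF, mul_div_assoc]
    have : (1 - y ^ (2 * m)) / (2 * m) ≤ 1 - y := by
      rw [div_le_iff₀ (by positivity)]
      linarith
    nlinarith [hy.1, hy.2]
  have := hanti ht (right_mem_Icc.2 zero_le_one) ht.2
  simp only [h, sub_self, oddGraphF_one hm] at this
  linarith

theorem sqrt_one_sub_oddGraphF_sq_le (hm : m ≠ 0) {t : ℝ} (ht : t ∈ Icc (0 : ℝ) 1) :
    √(1 - oddGraphF m t ^ 2) ≤ √(2 * m + 1) * (1 - t) := by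
  have hsq : (√(2 * m + 1) * (1 - t)) ^ 2 = (2 * m + 1) * (1 - t) ^ 2 := by
    rw [mul_pow, sq_sqrt (by positivity)]
  refine sqrt_le_iff.2 ⟨mul_nonneg (sqrt_nonneg _) (sub_nonneg.2 ht.2), ?_⟩
  rw [hsq]
  nlinarith [one_sub_oddGraphF_le hm ht, sq_nonneg (oddGraphF m t - 1)]

theorem exists_flow_oddGraphF (hm : m ≠ 0) :
    ∃ x : ℝ → ℝ, (∀ s, HasDerivAt x (√(1 - oddGraphF m (x s) ^ 2)) s ∧ x s ∈ Ioo (-1) 1) ∧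
      Tendsto x atBot (𝓝 (-1)) ∧ Tendsto x atTop (𝓝 1) := by
  set g : ℝ → ℝ := fun y => √(1 - oddGraphF m y ^ 2)
  have hg : Continuous g :=
    (continuous_const.sub ((differentiable_oddGraphF m).continuous.pow 2)).sqrt
  have hpos : ∀ t ∈ Ioo (-1 : ℝ) 1, 0 < g t := fun t ht =>
    sqrt_pos.2 (by nlinarith [abs_lt.1 (abs_oddGraphF_lt_one hm ht), sq_abs (oddGraphF m t)])
  have hK : 0 < √(2 * m + 1 : ℝ) := sqrt_pos.2 (by positivity)
  have hbound_top : ∀ t ∈ Ico (0 : ℝ) 1, g t ≤ √(2 * m + 1) * (1 - t) := fun t ht =>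
    sqrt_one_sub_oddGraphF_sq_le hm (Ico_subset_Icc_self ht)
  have hbound_bot : ∀ t ∈ Ioc (-1 : ℝ) 0, g t ≤ √(2 * m + 1) * (t - -1) := fun t ht => by
    have := sqrt_one_sub_oddGraphF_sq_le hm (t := -t) ⟨by linarith [ht.2], by linarith [ht.1]⟩
    rw [oddGraphF_neg, neg_sq, sub_neg_eq_add] at this
    rwa [sub_neg_eq_add, add_comm t]
  exact exists_global_solution_of_tendsto_travelTime ⟨neg_one_lt_zero, one_pos⟩
    hg.continuousOn hpos
    (tendsto_travelTime_nhdsGT neg_one_lt_zero hg.continuousOn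
      (fun t ht => hpos t ⟨ht.1, ht.2.trans_lt one_pos⟩) hK hbound_bot)
    (tendsto_travelTime_nhdsLT one_pos hg.continuousOn
      (fun t ht => hpos t ⟨neg_one_lt_zero.trans_le ht.1, ht.2⟩) hK hbound_top)

end OddGraph

/-- for `m ≥ 1` and `F(y) = ((2m+1)y − y^{2m+1})/(2m)` one has `F(1) = 1`,
`F(−1) = −1`, `F'(±1) = 0`, `F' > 0` and `|F| < 1` on `(−1,1)`, and there is a global
solution of `x' = cos θ`, `u' = sin θ`, `θ' = F'(x)` with `sin θ = F(x)`, `cos θ > 0`,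
`−1 < x < 1`, `x(s) → −1` as `s → −∞` and `x(s) → 1` as `s → +∞`; the plane curve
`(x,u)` is an infinite geodesic graph at the odd jet level `k = 2m+1 ≥ 3`. -/
theorem stmt_17 (m : ℕ) (hm : 1 ≤ m) :
    oddGraphF m 1 = 1 ∧
    oddGraphF m (-1) = -1 ∧
    deriv (oddGraphF m) 1 = 0 ∧
    deriv (oddGraphF m) (-1) = 0 ∧
    (∀ y ∈ Set.Ioo (-1 : ℝ) 1, 0 < deriv (oddGraphF m) y ∧ |oddGraphF m y| < 1) ∧
    ∃ x u θ : ℝ → ℝ,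
      (∀ s : ℝ, HasDerivAt x (Real.cos (θ s)) s ∧
        HasDerivAt u (Real.sin (θ s)) s ∧
        HasDerivAt θ (deriv (oddGraphF m) (x s)) s ∧
        Real.sin (θ s) = oddGraphF m (x s) ∧
        0 < Real.cos (θ s) ∧ x s ∈ Set.Ioo (-1 : ℝ) 1) ∧
      Tendsto x atBot (nhds (-1)) ∧ Tendsto x atTop (nhds 1) := by
  have hm0 : m ≠ 0 := Nat.one_le_iff_ne_zero.1 hm
  obtain ⟨x, hx, hbot, htop⟩ := exists_flow_oddGraphF hm0
  obtain ⟨u, θ, hsol⟩ := exists_curvature_solution_of_hasDerivAt (differentiable_oddGraphF m)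
    (fun s => (hx s).1) (fun s => abs_oddGraphF_lt_one hm0 (hx s).2)
  refine ⟨oddGraphF_one hm0, oddGraphF_neg_one hm0, ?_, ?_,
    fun y hy => ⟨deriv_oddGraphF_pos hm0 hy, abs_oddGraphF_lt_one hm0 hy⟩,
    x, u, θ, fun s => ?_, hbot, htop⟩
  · simp [deriv_oddGraphF]
  · simp [deriv_oddGraphF, pow_mul]
  · obtain ⟨hxs, hus, hθs, hsin, hcos⟩ := hsol s
    exact ⟨hxs, hus, hθs, hsin, hcos, (hx s).2⟩
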